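/- Let n ≥ 3 and suppose there exists a finite family 𝔉 = (𝓕_1, …, 𝓕_l) of finite sequences of simple graphs, each graph in each sequence having fewer than n vertices, such that the real matrix M with rows indexed by the sequences in 𝔉 and columns indexed by the isomorphism classes of n-vertex simple graphs, whose (𝓕, [H]) entry is c(𝓕, H), satisfies rank_ℝ(M) = ψ(n), the number of isomorphism classes of n-vertex simple graphs. Then every n-vertex simple graph is reconstructible: for all n-vertex graphs G and G', if G' is a reconstruction of G then G' is isomorphic to G. -/

import Mathlib

open SimpleGraph

/-- The vertex-deleted subgraph `G − v`: the induced subgraph of `G` obtained by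
deleting `v` and all edges incident with `v`. -/
abbrev vdel {n : ℕ} (G : SimpleGraph (Fin n)) (v : Fin n) :
    SimpleGraph ({v}ᶜ : Set (Fin n)) :=
  G.induce {v}ᶜ

/-- `H` is a reconstruction of `G`: there is a bijection `f` between the vertex
sets such that `G − v ≅ H − f v` for every vertex `v`. -/
def IsReconstruction {n : ℕ} (G H : SimpleGraph (Fin n)) : Prop :=
  ∃ f : Fin n ≃ Fin n, ∀ v : Fin n, Nonempty (vdel G v ≃g vdel H (f v))

/-- `s(F,G)`: the number of subgraphs of `G` isomorphic to `F`. -/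
noncomputable def subCount {k n : ℕ} (F : SimpleGraph (Fin k))
    (G : SimpleGraph (Fin n)) : ℕ :=
  Nat.card {H : G.Subgraph // Nonempty (F ≃g H.coe)}

/-- A finite sequence of simple graphs (on arbitrary finite vertex sets). -/
abbrev GSeq : Type := List (Σ k : ℕ, SimpleGraph (Fin k))

/-- `c(𝓕,G)`: the number of covers of `G` by the sequence `L`, i.e. of sequences
of subgraphs of `G`, the `i`-th being isomorphic to the `i`-th graph of `L`,
whose union (of both vertex sets and edge sets) is all of `G`. -/
noncomputable def coverCount {n : ℕ} (L : GSeq) (G : SimpleGraph (Fin n)) : ℕ :=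
  Nat.card {C : Fin L.length → G.Subgraph //
    (∀ i, Nonempty ((L.get i).2 ≃g (C i).coe)) ∧ (⨆ i, C i) = ⊤}

/-- `R` is a transversal of the isomorphism classes of graphs in `C`:
it contains exactly one representative of each isomorphism class in `C`. -/
def IsIsoTransversal {n : ℕ} (C : Set (SimpleGraph (Fin n)))
    (R : Finset (SimpleGraph (Fin n))) : Prop :=
  ↑R ⊆ C ∧ ∀ G ∈ C, ∃! H, H ∈ R ∧ Nonempty (G ≃g H)

/-- `D` is a transversal of the reconstruction classes of graphs in `C`:
it contains exactly one representative of each `∼`-equivalence class in `C`. -/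
def IsReconTransversal {n : ℕ} (C : Set (SimpleGraph (Fin n)))
    (D : Finset (SimpleGraph (Fin n))) : Prop :=
  ↑D ⊆ C ∧ ∀ G ∈ C, ∃! H, H ∈ D ∧ IsReconstruction G H

/-!
Kelly's lemma: if `φ` is an isomorphism invariant and `k < n`, then the sum of `φ` over the
`k`-vertex subgraphs of `G` is determined by the deck, because summing it over all `G - v` counts
every such subgraph exactly `n - k` times. Kocay's lemma expands `∏ᵢ s(Fᵢ, G)` as the sum of
`c(𝓕, X)` over all subgraphs `X` of `G`. The product and the terms with `|X| < n` are
reconstructible, hence so is the spanning part `∑_H c(𝓕, H) s(H, G)`, `H` running over the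
isomorphism classes of `n`-vertex graphs. Full column rank then recovers every `s(H, G)` from the
deck. In particular `G` and `G'` each contain a copy of the other, and two graphs on the same
finite vertex set that embed into each other have equally many edges, hence are isomorphic.
-/

namespace SimpleGraph

variable {V W : Type*} {G : SimpleGraph V} {G' : SimpleGraph W}

noncomputable instance Subgraph.instFintypeOfFinite [Finite V] : Fintype G.Subgraph :=
  Fintype.ofFinite _

lemma Subgraph.gc_map_comap (f : G →g G') : GaloisConnection (Subgraph.map f) (Subgraph.comap f) :=
  Subgraph.map_le_iff_le_comap f

noncomputable def Iso.subgraphOrderIso (e : G ≃g G') : G.Subgraph ≃o G'.Subgraph :=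
  Equiv.toOrderIso
    { toFun := Subgraph.map e.toHom
      invFun := Subgraph.map e.symm.toHom
      left_inv := fun Y => by rw [← Subgraph.map_comp, e.symm_toHom_comp_toHom, Subgraph.map_id]
      right_inv := fun Y => by rw [← Subgraph.map_comp, e.toHom_comp_symm_toHom, Subgraph.map_id] }
    Subgraph.map_monotone Subgraph.map_monotone

noncomputable def Iso.isoSubgraphOrderIso (e : G ≃g G') (Y : G.Subgraph) :
    Y.coe ≃g (e.subgraphOrderIso Y).coe :=
  e.toEmbedding.toCopy.isoSubgraphMap Y

noncomputable def Subgraph.isoCoeSubgraph {X : G.Subgraph} (Z : X.coe.Subgraph) :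
    Z.coe ≃g (Subgraph.coeSubgraph Z).coe :=
  X.coeCopy.isoSubgraphMap Z

lemma Subgraph.coeSubgraph_iSup {X : G.Subgraph} {ι : Sort*} (D : ι → X.coe.Subgraph) :
    Subgraph.coeSubgraph (⨆ i, D i) = ⨆ i, Subgraph.coeSubgraph (D i) :=
  (Subgraph.gc_map_comap X.hom).l_iSup

lemma Subgraph.coeSubgraph_top (X : G.Subgraph) :
    Subgraph.coeSubgraph (⊤ : X.coe.Subgraph) = X := by
  ext <;> simp

lemma Subgraph.coeSubgraph_restrict_of_le {X Y : G.Subgraph} (h : Y ≤ X) :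
    Subgraph.coeSubgraph (X.restrict Y) = Y := by
  rw [Subgraph.coeSubgraph_restrict_eq, inf_eq_right.mpr h]

lemma Subgraph.le_induce_top_iff {Y : G.Subgraph} {s : Set V} :
    Y ≤ (⊤ : G.Subgraph).induce s ↔ Y.verts ⊆ s :=
  ⟨fun h => h.1, fun h => le_induce_top_verts.trans (Subgraph.induce_mono_right h)⟩

lemma Subgraph.nonempty_iso_coeSubgraph_iff {X : G.Subgraph} (Z : X.coe.Subgraph)
    {α : Type*} (F : SimpleGraph α) :
    Nonempty (F ≃g (Subgraph.coeSubgraph Z).coe) ↔ Nonempty (F ≃g Z.coe) :=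
  ⟨fun ⟨f⟩ => ⟨(Subgraph.isoCoeSubgraph Z).symm.comp f⟩,
    fun ⟨f⟩ => ⟨(Subgraph.isoCoeSubgraph Z).comp f⟩⟩

lemma IsContained.ncard_edgeSet_le [Finite W] (h : G ⊑ G') :
    G.edgeSet.ncard ≤ G'.edgeSet.ncard := by
  obtain ⟨f⟩ := h
  exact Finite.card_le_of_embedding f.mapEdgeSet

theorem IsContained.nonempty_iso [Finite V] {H : SimpleGraph V} (hGH : G ⊑ H) (hHG : H ⊑ G) :
    Nonempty (G ≃g H) := by
  obtain ⟨f, hf⟩ := isContained_iff_exists_le_comap.1 hGH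
  let σ := Equiv.ofBijective f (Finite.injective_iff_bijective.1 f.injective)
  have hle : G.edgeSet ⊆ (H.comap σ).edgeSet := edgeSet_mono hf
  have hcard : (H.comap σ).edgeSet.ncard ≤ G.edgeSet.ncard :=
    ((Iso.comap σ H).isContained.ncard_edgeSet_le).trans hHG.ncard_edgeSet_le
  have hG : G = H.comap σ := edgeSet_inj.1 (Set.eq_of_subset_of_ncard_le hle hcard (Set.toFinite _))
  exact ⟨hG ▸ Iso.comap σ H⟩

end SimpleGraph

lemma Matrix.mulVec_injective_of_rank_eq_card {m n K : Type*} [Fintype m] [Fintype n] [Field K]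
    (A : Matrix m n K) (h : A.rank = Fintype.card n) : Function.Injective A.mulVec := by
  have hker := A.mulVecLin.finrank_range_add_finrank_ker
  rw [← Matrix.rank, h, Module.finrank_fintype_fun_eq_card, add_eq_left,
    Submodule.finrank_eq_zero] at hker
  exact LinearMap.ker_eq_bot.1 hker

section GraphParameters

variable {V W : Type} {G : SimpleGraph V} {G' : SimpleGraph W}

def IsIsoInvariant (φ : ∀ α : Type, SimpleGraph α → ℕ) : Prop :=
  ∀ ⦃α β : Type⦄ ⦃H : SimpleGraph α⦄ ⦃H' : SimpleGraph β⦄, (H ≃g H') → φ α H = φ β H'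

noncomputable def subgraphSum (φ : ∀ α : Type, SimpleGraph α → ℕ) (k : ℕ) [Finite V]
    (G : SimpleGraph V) : ℕ :=
  ∑ X : G.Subgraph with Nat.card X.verts = k, φ _ X.coe

/-- `coverCount` for graphs on an arbitrary vertex type, such as the `X.coe` of a subgraph. -/
noncomputable def numCovers (L : GSeq) (G : SimpleGraph V) : ℕ :=
  Nat.card {C : Fin L.length → G.Subgraph //
    (∀ i, Nonempty ((L.get i).2 ≃g (C i).coe)) ∧ (⨆ i, C i) = ⊤}

variable {φ : ∀ α : Type, SimpleGraph α → ℕ} {k : ℕ}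

lemma subgraphSum_congr [Finite V] [Finite W] (hφ : IsIsoInvariant φ) (e : G ≃g G') :
    subgraphSum φ k G = subgraphSum φ k G' :=
  Finset.sum_equiv e.subgraphOrderIso.toEquiv
    (fun X => by simp only [Finset.mem_filter, Finset.mem_univ, true_and, RelIso.coe_fn_toEquiv,
      Nat.card_congr (e.isoSubgraphOrderIso X).toEquiv])
    (fun X _ => hφ (e.isoSubgraphOrderIso X))

lemma numCovers_congr (L : GSeq) (e : G ≃g G') : numCovers L G = numCovers L G' := by
  refine Nat.card_congr (Equiv.subtypeEquiv (Equiv.piCongrRight fun _ => e.subgraphOrderIso.toEquiv)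
    fun C => and_congr (forall_congr' fun i => ?_) ?_)
  · exact ⟨fun ⟨f⟩ => ⟨(e.isoSubgraphOrderIso (C i)).comp f⟩,
      fun ⟨f⟩ => ⟨(e.isoSubgraphOrderIso (C i)).symm.comp f⟩⟩
  · change _ ↔ ⨆ i, e.subgraphOrderIso (C i) = ⊤
    rw [← e.subgraphOrderIso.map_iSup, ← e.subgraphOrderIso.map_top,
      e.subgraphOrderIso.apply_eq_iff_eq]

lemma isIsoInvariant_numCovers (L : GSeq) : IsIsoInvariant fun _ H => numCovers L H :=
  fun _ _ _ _ e => numCovers_congr L e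

open scoped Classical in
lemma subgraphSum_coe [Finite V] (hφ : IsIsoInvariant φ) (X : G.Subgraph) :
    subgraphSum φ k X.coe = ∑ Y : G.Subgraph with Y ≤ X ∧ Nat.card Y.verts = k, φ _ Y.coe := by
  have hcard (Z : X.coe.Subgraph) : Nat.card Z.verts = Nat.card (Subgraph.coeSubgraph Z).verts :=
    Nat.card_congr (Subgraph.isoCoeSubgraph Z).toEquiv
  refine Finset.sum_nbij' Subgraph.coeSubgraph X.restrict ?_ ?_ ?_ ?_ ?_
  · intro Z hZ
    simp only [Finset.mem_filter, Finset.mem_univ, true_and, hcard] at hZ ⊢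
    exact ⟨Subgraph.coeSubgraph_le Z, hZ⟩
  · intro Y hY
    simp only [Finset.mem_filter, Finset.mem_univ, true_and, hcard] at hY ⊢
    rw [Subgraph.coeSubgraph_restrict_of_le hY.1]
    exact hY.2
  · exact fun Z _ => Subgraph.restrict_coeSubgraph Z
  · intro Y hY
    exact Subgraph.coeSubgraph_restrict_of_le (Finset.mem_filter.1 hY).2.1
  · exact fun Z _ => hφ (Subgraph.isoCoeSubgraph Z)

open scoped Classical in
lemma subgraphSum_induce_compl_singleton [Finite V] (hφ : IsIsoInvariant φ) (v : V) :
    subgraphSum φ k (G.induce {v}ᶜ) =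
      ∑ Y : G.Subgraph with v ∉ Y.verts ∧ Nat.card Y.verts = k, φ _ Y.coe := by
  have e : G.induce {v}ᶜ ≃g ((⊤ : G.Subgraph).induce {v}ᶜ).coe :=
    induce_eq_coe_induce_top (G := G) {v}ᶜ ▸ Iso.refl
  rw [subgraphSum_congr hφ e, subgraphSum_coe hφ]
  simp only [Subgraph.le_induce_top_iff, Set.subset_compl_singleton_iff]

lemma card_filter_notMem [Fintype V] (s : Set V) [DecidablePred (· ∈ s)] :
    (Finset.univ.filter (· ∉ s)).card = Fintype.card V - Nat.card s := by
  classical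
  rw [Nat.card_eq_card_toFinset, ← Finset.card_compl]
  congr 1
  ext; simp

theorem sum_subgraphSum_induce_compl_singleton [Fintype V] (hφ : IsIsoInvariant φ)
    (G : SimpleGraph V) :
    ∑ v, subgraphSum φ k (G.induce {v}ᶜ) = (Fintype.card V - k) * subgraphSum φ k G := by
  classical
  simp_rw [subgraphSum_induce_compl_singleton hφ]
  rw [Finset.sum_comm' (t' := {Y : G.Subgraph | Nat.card Y.verts = k})
    (s' := fun Y => {v | v ∉ Y.verts}) (by intros; simp), subgraphSum, Finset.mul_sum]
  refine Finset.sum_congr rfl fun Y hY => ?_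
  rw [Finset.sum_const, smul_eq_mul, card_filter_notMem, (Finset.mem_filter.1 hY).2]

end GraphParameters

theorem subgraphSum_eq_of_isReconstruction {φ : ∀ α : Type, SimpleGraph α → ℕ} {k n : ℕ}
    (hφ : IsIsoInvariant φ) (hk : k < n) {G G' : SimpleGraph (Fin n)}
    (h : IsReconstruction G G') : subgraphSum φ k G = subgraphSum φ k G' := by
  obtain ⟨f, hf⟩ := h
  have hdeck : ∑ v, subgraphSum φ k (G.induce {v}ᶜ) = ∑ v, subgraphSum φ k (G'.induce {v}ᶜ) :=
    (Fintype.sum_congr _ _ fun v => subgraphSum_congr hφ (hf v).some).trans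
      (f.sum_comp fun v => subgraphSum φ k (G'.induce {v}ᶜ))
  rw [sum_subgraphSum_induce_compl_singleton hφ, sum_subgraphSum_induce_compl_singleton hφ,
    Fintype.card_fin] at hdeck
  exact Nat.eq_of_mul_eq_mul_left (Nat.sub_pos_of_lt hk) hdeck

section Copies

variable {V α : Type}

open scoped Classical in
noncomputable def isoIndicator (F : SimpleGraph α) : ∀ β : Type, SimpleGraph β → ℕ :=
  fun _ H => if Nonempty (F ≃g H) then 1 else 0

lemma isIsoInvariant_isoIndicator (F : SimpleGraph α) : IsIsoInvariant (isoIndicator F) := by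
  intro β γ H H' e
  simp only [isoIndicator]
  congr 1
  exact propext ⟨fun ⟨f⟩ => ⟨e.comp f⟩, fun ⟨f⟩ => ⟨e.symm.comp f⟩⟩

lemma card_copies_eq_subgraphSum [Finite V] (F : SimpleGraph α) (G : SimpleGraph V) :
    Nat.card {X : G.Subgraph // Nonempty (F ≃g X.coe)} =
      subgraphSum (isoIndicator F) (Nat.card α) G := by
  classical
  rw [subgraphSum, Finset.sum_filter, Nat.card_eq_fintype_card, Fintype.card_subtype,
    Finset.card_filter]
  refine Finset.sum_congr rfl fun X _ => ?_
  by_cases hX : Nonempty (F ≃g X.coe)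
  · simp [isoIndicator, hX, Nat.card_congr hX.some.toEquiv]
  · simp [isoIndicator, hX]

theorem subCount_eq_of_isReconstruction {k n : ℕ} (F : SimpleGraph (Fin k)) (hk : k < n)
    {G G' : SimpleGraph (Fin n)} (h : IsReconstruction G G') : subCount F G = subCount F G' := by
  simp only [subCount, card_copies_eq_subgraphSum]
  exact subgraphSum_eq_of_isReconstruction (isIsoInvariant_isoIndicator F) (by simpa using hk) h

end Copies

section Kocay

variable {V α : Type} {G : SimpleGraph V}


abbrev CopyTuple (L : GSeq) (G : SimpleGraph V) : Type :=
  {C : Fin L.length → G.Subgraph // ∀ i, Nonempty ((L.get i).2 ≃g (C i).coe)}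

noncomputable def copyTupleFiberEquiv (L : GSeq) (X : G.Subgraph) :
    {C : CopyTuple L G // ⨆ i, C.1 i = X} ≃
      {D : Fin L.length → X.coe.Subgraph //
        (∀ i, Nonempty ((L.get i).2 ≃g (D i).coe)) ∧ ⨆ i, D i = ⊤} where
  toFun C :=
    have hle (i) : C.1.1 i ≤ X := (le_iSup (fun j => C.1.1 j) i).trans C.2.le
    ⟨fun i => X.restrict (C.1.1 i),
      fun i => (Subgraph.nonempty_iso_coeSubgraph_iff _ _).1 <| by
        rw [Subgraph.coeSubgraph_restrict_of_le (hle i)]; exact C.1.2 i,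
      Subgraph.coeSubgraph_injective X <| by
        simp only [Subgraph.coeSubgraph_iSup, Subgraph.coeSubgraph_restrict_of_le (hle _),
          Subgraph.coeSubgraph_top, C.2]⟩
  invFun D :=
    ⟨⟨fun i => Subgraph.coeSubgraph (D.1 i),
      fun i => (Subgraph.nonempty_iso_coeSubgraph_iff _ _).2 (D.2.1 i)⟩,
      by rw [← Subgraph.coeSubgraph_iSup, D.2.2, Subgraph.coeSubgraph_top]⟩
  left_inv C := Subtype.ext <| Subtype.ext <| funext fun i =>
    Subgraph.coeSubgraph_restrict_of_le ((le_iSup (fun j => C.1.1 j) i).trans C.2.le)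
  right_inv D := Subtype.ext <| funext fun i => Subgraph.restrict_coeSubgraph (D.1 i)

theorem prod_card_copies_eq_sum_numCovers [Finite V] (L : GSeq) (G : SimpleGraph V) :
    ∏ i, Nat.card {X : G.Subgraph // Nonempty ((L.get i).2 ≃g X.coe)} =
      ∑ X : G.Subgraph, numCovers L X.coe := by
  rw [← Nat.card_pi, ← Nat.card_congr Equiv.subtypePiEquivPi,
    Nat.card_congr (Equiv.sigmaFiberEquiv fun C : CopyTuple L G => ⨆ i, C.1 i).symm,
    Nat.card_sigma]
  exact Finset.sum_congr rfl fun X _ => Nat.card_congr (copyTupleFiberEquiv L X)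

end Kocay

section Transversal

variable {V α : Type} [Finite V] [Finite α] {φ : ∀ β : Type, SimpleGraph β → ℕ}

lemma sum_mul_isoIndicator_of_transversal (hφ : IsIsoInvariant φ)
    {R : Finset (SimpleGraph α)} (hR : ∀ H : SimpleGraph α, ∃! H' ∈ R, Nonempty (H ≃g H'))
    {β : Type} [Finite β] (hβ : Nat.card β = Nat.card α) (K : SimpleGraph β) :
    ∑ H ∈ R, φ α H * isoIndicator H β K = φ β K := by
  obtain ⟨σ⟩ := Finite.card_eq.mp hβ
  obtain ⟨H₀, ⟨hH₀, ⟨e₀⟩⟩, huniq⟩ := hR (K.map σ.toEmbedding)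
  have eK : H₀ ≃g K := (e₀.symm.trans (Iso.map σ K).symm)
  rw [Finset.sum_eq_single_of_mem H₀ hH₀]
  · simp [isoIndicator, Nonempty.intro eK, hφ eK]
  · intro H hH hne
    have hH : ¬Nonempty (H ≃g K) := fun ⟨e⟩ => hne (huniq H ⟨hH, ⟨(e.trans (Iso.map σ K)).symm⟩⟩)
    simp [isoIndicator, hH]

theorem subgraphSum_eq_sum_transversal (hφ : IsIsoInvariant φ)
    {R : Finset (SimpleGraph α)} (hR : ∀ H : SimpleGraph α, ∃! H' ∈ R, Nonempty (H ≃g H'))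
    (G : SimpleGraph V) :
    subgraphSum φ (Nat.card α) G =
      ∑ H ∈ R, φ α H * Nat.card {X : G.Subgraph // Nonempty (H ≃g X.coe)} := by
  simp_rw [card_copies_eq_subgraphSum, subgraphSum, Finset.mul_sum]
  rw [Finset.sum_comm]
  refine Finset.sum_congr rfl fun X hX => ?_
  exact (sum_mul_isoIndicator_of_transversal hφ hR (Finset.mem_filter.1 hX).2 X.coe).symm

end Transversal

section Reconstruction

variable {n : ℕ}

lemma sum_numCovers_eq_sum_subgraphSum (L : GSeq) (G : SimpleGraph (Fin n)) :
    ∑ X : G.Subgraph, numCovers L X.coe =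
      ∑ k ∈ Finset.range (n + 1), subgraphSum (fun _ H => numCovers L H) k G := by
  refine (Finset.sum_fiberwise_of_maps_to (g := fun X : G.Subgraph => Nat.card X.verts)
    (fun X _ => Finset.mem_range_succ_iff.2 ((Finite.card_subtype_le (· ∈ X.verts)).trans_eq
      (Nat.card_fin n))) _).symm

theorem subgraphSum_numCovers_eq_of_isReconstruction (L : GSeq) (hL : ∀ F ∈ L, F.1 < n)
    {G G' : SimpleGraph (Fin n)} (h : IsReconstruction G G') :
    subgraphSum (fun _ H => numCovers L H) n G = subgraphSum (fun _ H => numCovers L H) n G' := by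
  have hprod : ∏ i, subCount (L.get i).2 G = ∏ i, subCount (L.get i).2 G' :=
    Finset.prod_congr rfl fun i _ => subCount_eq_of_isReconstruction _ (hL _ (List.get_mem L i)) h
  have hsmall : ∀ k ∈ Finset.range n, subgraphSum (fun _ H => numCovers L H) k G =
      subgraphSum (fun _ H => numCovers L H) k G' := fun k hk =>
    subgraphSum_eq_of_isReconstruction (isIsoInvariant_numCovers L) (Finset.mem_range.1 hk) h
  unfold subCount at hprod
  rw [prod_card_copies_eq_sum_numCovers, prod_card_copies_eq_sum_numCovers,
    sum_numCovers_eq_sum_subgraphSum, sum_numCovers_eq_sum_subgraphSum, Finset.sum_range_succ,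
    Finset.sum_range_succ, Finset.sum_congr rfl hsmall] at hprod
  exact Nat.add_left_cancel hprod

end Reconstruction



section Main

variable {n : ℕ}

lemma subCount_pos_iff {k : ℕ} {F : SimpleGraph (Fin k)} {G : SimpleGraph (Fin n)} :
    0 < subCount F G ↔ F ⊑ G := by
  rw [subCount, Nat.card_pos_iff, isContained_iff_exists_iso_subgraph, nonempty_subtype]
  exact and_iff_left inferInstance

lemma isContained_of_forall_subCount_eq {R : Finset (SimpleGraph (Fin n))}
    (hR : IsIsoTransversal Set.univ R) {G G' : SimpleGraph (Fin n)}
    (h : ∀ H ∈ R, subCount H G = subCount H G') : G ⊑ G' := by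
  obtain ⟨H, ⟨hHR, ⟨e⟩⟩, -⟩ := hR.2 G (Set.mem_univ G)
  exact e.isContained.trans (subCount_pos_iff.1 (h H hHR ▸ subCount_pos_iff.2 e.isContained'))

lemma sum_coverCount_mul_subCount {R : Finset (SimpleGraph (Fin n))}
    (hR : IsIsoTransversal Set.univ R) (L : GSeq) (G : SimpleGraph (Fin n)) :
    ∑ H : R, coverCount L (H : SimpleGraph (Fin n)) * subCount (H : SimpleGraph (Fin n)) G =
      subgraphSum (fun _ H => numCovers L H) n G := by
  have h := subgraphSum_eq_sum_transversal (isIsoInvariant_numCovers L)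
    (fun H => hR.2 H (Set.mem_univ H)) G
  rw [Nat.card_fin] at h
  exact (Finset.sum_coe_sort R fun H : SimpleGraph (Fin n) => coverCount L H * subCount H G).trans
    h.symm

end Main

theorem stmt_9_general {n l : ℕ}
    (𝔉 : Fin l → GSeq) (h𝔉 : ∀ i : Fin l, ∀ F ∈ 𝔉 i, F.1 < n)
    (R : Finset (SimpleGraph (Fin n)))
    (hR : IsIsoTransversal Set.univ R)
    (hrank : (Matrix.of fun (i : Fin l) (H : ↥R) =>
        ((coverCount (𝔉 i) (H : SimpleGraph (Fin n)) : ℝ))).rank = R.card) :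
    ∀ G G' : SimpleGraph (Fin n), IsReconstruction G G' → Nonempty (G' ≃g G) := by
  intro G G' hGG'
  set M := Matrix.of fun (i : Fin l) (H : ↥R) => (coverCount (𝔉 i) (H : SimpleGraph (Fin n)) : ℝ)
  let counts (K : SimpleGraph (Fin n)) : R → ℝ := fun H => subCount (H : SimpleGraph (Fin n)) K
  have hrow (K : SimpleGraph (Fin n)) (i : Fin l) :
      M.mulVec (counts K) i = subgraphSum (fun _ H => numCovers (𝔉 i) H) n K := by
    simp only [M, counts, Matrix.mulVec, dotProduct, Matrix.of_apply]
    exact_mod_cast sum_coverCount_mul_subCount hR (𝔉 i) K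
  have hcounts : counts G = counts G' :=
    M.mulVec_injective_of_rank_eq_card (by rw [hrank, Fintype.card_coe]) <| funext fun i => by
      rw [hrow, hrow, subgraphSum_numCovers_eq_of_isReconstruction _ (h𝔉 i) hGG']
  have hsubCount (H) (hH : H ∈ R) : subCount H G = subCount H G' := by
    exact Nat.cast_inj.1 (congrFun hcounts ⟨H, hH⟩)
  exact (isContained_of_forall_subCount_eq hR fun H hH => (hsubCount H hH).symm).nonempty_iso
    (isContained_of_forall_subCount_eq hR hsubCount)

/-- Let `n ≥ 3` and suppose there is a finite family `𝔉 = (L_1, …, L_l)` of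
sequences of graphs, each graph having fewer than `n` vertices, such that the
matrix of covering numbers `c(L_i, H)` — rows indexed by `Fin l`, columns
indexed by the isomorphism classes of `n`-vertex graphs (a transversal `R` of
all `n`-vertex graphs) — has rank `ψ(n) = R.card` over `ℝ`. Then every
`n`-vertex graph is reconstructible. -/
theorem stmt_9 {n l : ℕ} (hn : 3 ≤ n)
    (𝔉 : Fin l → GSeq) (h𝔉 : ∀ i : Fin l, ∀ F ∈ 𝔉 i, F.1 < n)
    (R : Finset (SimpleGraph (Fin n)))
    (hR : IsIsoTransversal Set.univ R)
    (hrank : (Matrix.of fun (i : Fin l) (H : ↥R) =>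
        ((coverCount (𝔉 i) (H : SimpleGraph (Fin n)) : ℝ))).rank = R.card) :
    ∀ G G' : SimpleGraph (Fin n), IsReconstruction G G' → Nonempty (G' ≃g G) :=
  stmt_9_general 𝔉 h𝔉 R hR hrank
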